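/- Assume the Common Givens: P_i is a preference order on C consistent with Q; the query is the pair (c_j,c_k) with P_i(c_j,c_k); and neither (c_j,c_k) nor (c_k,c_j) belongs to Q. Let P' be a preference order consistent with the transitive closure of Q ∪ {(c_k,c_j)}. If there exists a candidate c with P'(c_k,c) and P'(c,c_j), i.e. the open segment (c_k, P', c_j) is nonempty, then P' ∉ μ(P_i). -/

import Mathlib

/-- A preference order: a strict total order on candidates. -/
def IsPref {C : Type*} (P : C → C → Prop) : Prop :=
  (∀ a b : C, a ≠ b → P a b ∨ P b a) ∧ (∀ a : C, ¬ P a a) ∧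
    ∀ a b c : C, P a b → P b c → P a c

/-- The (closed) segment `[c, P, c']` of candidates between `c` and `c'`. -/
def seg {C : Type*} (P : C → C → Prop) (c c' : C) : Set C :=
  {d : C | (d = c ∨ P c d) ∧ (d = c' ∨ P d c')}

/-- `Q` is a strict partial order (consistent, transitively closed reported preferences). -/
def IsSPO {C : Type*} (Q : C → C → Prop) : Prop :=
  (∀ a : C, ¬ Q a a) ∧ ∀ a b c : C, Q a b → Q b c → Q a c

/-- `P` is consistent with (extends) the reported preferences `Q`, written `P ⊨ Q`. -/
def Extends {C : Type*} (P Q : C → C → Prop) : Prop := ∀ a b : C, Q a b → P a b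

/-- The swap distance between two preference orders: the number of (unordered) pairs of
candidates ordered differently, counted here as ordered pairs `(a, b)` with
`P a b` and `P' b a`. -/
noncomputable def dswap {C : Type*} [Fintype C] (P P' : C → C → Prop) : ℕ :=
  Set.ncard {p : C × C | P p.1 p.2 ∧ P' p.2 p.1}

/-- `P` is a preference order consistent with the transitive closure of `Q ∪ {(ck, cj)}`
(for a transitive total order this is the same as extending `Q` and putting `ck` above `cj`). -/
def Feasible {C : Type*} (Q : C → C → Prop) (cj ck : C) (P : C → C → Prop) : Prop :=
  IsPref P ∧ Extends P Q ∧ P ck cj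

/-- `P ∈ μ(Pi)`: among all preference orders consistent with the transitive closure of
`Q ∪ {(ck, cj)}`, `P` minimizes the swap distance to `Pi`. -/
def InMu {C : Type*} [Fintype C] (Q : C → C → Prop) (cj ck : C)
    (Pi P : C → C → Prop) : Prop :=
  Feasible Q cj ck P ∧ ∀ R : C → C → Prop, Feasible Q cj ck R → dswap Pi P ≤ dswap Pi R

/-!
An adjacent pair of `P` that `Pi` orders the other way can be swapped without touching any other
pair, which lowers the swap distance to `Pi` by one. Since `P` puts `ck` above `cj` and `Pi` does
not, such an adjacent inversion exists. A candidate strictly between `ck` and `cj` ensures it is not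
`(ck, cj)`, so the swap keeps `ck` above `cj`, and it keeps `Q` because `Pi` respects `Q`: the result
is a feasible order strictly closer to `Pi`.
-/

def Adjacent {C : Type*} (P : C → C → Prop) (x y : C) : Prop :=
  P x y ∧ ∀ z, ¬ (P x z ∧ P z y)

def swapPref {C : Type*} [DecidableEq C] (P : C → C → Prop) (x y : C) : C → C → Prop :=
  fun a b => P (Equiv.swap x y a) (Equiv.swap x y b)

namespace IsPref

variable {C : Type*} {P : C → C → Prop}

theorem irrefl (hP : IsPref P) (a : C) : ¬ P a a := hP.2.1 a

theorem trans (hP : IsPref P) {a b c : C} (hab : P a b) (hbc : P b c) : P a c :=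
  hP.2.2 a b c hab hbc

theorem asymm (hP : IsPref P) {a b : C} (hab : P a b) : ¬ P b a :=
  fun hba => hP.irrefl a (hP.trans hab hba)

theorem ne (hP : IsPref P) {a b : C} (hab : P a b) : a ≠ b :=
  fun h => hP.irrefl a (h ▸ hab)

theorem total (hP : IsPref P) {a b : C} (hab : a ≠ b) : P a b ∨ P b a := hP.1 a b hab

theorem comp_injective (hP : IsPref P) {σ : C → C} (hσ : Function.Injective σ) :
    IsPref fun a b => P (σ a) (σ b) :=
  ⟨fun _ _ hab => hP.total (hσ.ne hab), fun a => hP.irrefl (σ a),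
    fun _ _ _ => hP.trans⟩

theorem swapPref [DecidableEq C] (hP : IsPref P) (x y : C) : IsPref (swapPref P x y) :=
  hP.comp_injective (Equiv.swap x y).injective

theorem gt_iff_gt_of_adjacent (hP : IsPref P) {x y b : C} (hxy : Adjacent P x y)
    (hbx : b ≠ x) : P b x ↔ P b y :=
  ⟨fun h => hP.trans h hxy.1, fun h =>
    (hP.total hbx).resolve_right fun hxb => hxy.2 b ⟨hxb, h⟩⟩

theorem lt_iff_lt_of_adjacent (hP : IsPref P) {x y b : C} (hxy : Adjacent P x y)
    (hby : b ≠ y) : P x b ↔ P y b :=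
  ⟨fun h => (hP.total hby.symm).resolve_right fun hby' => hxy.2 b ⟨h, hby'⟩,
    fun h => hP.trans hxy.1 h⟩

theorem swapPref_iff [DecidableEq C] (hP : IsPref P) {x y a b : C} (hxy : Adjacent P x y)
    (h₁ : (a, b) ≠ (x, y)) (h₂ : (a, b) ≠ (y, x)) : _root_.swapPref P x y a b ↔ P a b := by
  have hyx : y ≠ x := (hP.ne hxy.1).symm
  by_cases hab : a = b
  · subst hab
    exact iff_of_false (hP.irrefl _) (hP.irrefl _)
  unfold _root_.swapPref
  by_cases hax : a = x <;> by_cases hay : a = y <;> by_cases hbx : b = x <;>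
    by_cases hby : b = y <;> simp_all [Equiv.swap_apply_of_ne_of_ne,
      hP.gt_iff_gt_of_adjacent hxy, hP.lt_iff_lt_of_adjacent hxy]

theorem exists_adjacent_inversion [Finite C] (hP : IsPref P) {Pi : C → C → Prop}
    (hPi : IsPref Pi) {a b : C} (hab : P a b) (hba : Pi b a) :
    ∃ x y, Adjacent P x y ∧ Pi y x := by
  induction hn : {d | P a d ∧ P d b}.ncard using Nat.strong_induction_on generalizing a b with
  | _ n ih =>
  -- a candidate `z` strictly between `a` and `b` splits the pair into two shorter ones, and `Pi`
  -- reverses at least one of them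
  by_cases hadj : Adjacent P a b
  · exact ⟨a, b, hadj, hba⟩
  obtain ⟨z, haz, hzb⟩ : ∃ z, P a z ∧ P z b := by
    simpa [Adjacent, hab] using hadj
  have hlt : ∀ {u v}, {d | P u d ∧ P d v} ⊆ {d | P a d ∧ P d b} → z ∉ {d | P u d ∧ P d v} →
      {d | P u d ∧ P d v}.ncard < n := fun hsub hz =>
    hn ▸ Set.ncard_lt_ncard (LE.le.ssubset_of_not_superset hsub
      fun h => hz (h ⟨haz, hzb⟩)) (Set.toFinite _)
  rcases hPi.total (hP.ne haz) with hPaz | hPza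
  · exact ih _ (hlt (fun d hd => ⟨hP.trans haz hd.1, hd.2⟩) (fun hz => hP.irrefl z hz.1))
      hzb (hPi.trans hba hPaz) rfl
  · exact ih _ (hlt (fun d hd => ⟨hd.1, hP.trans hd.2 hzb⟩) (fun hz => hP.irrefl z hz.2))
      haz hPza rfl

end IsPref

section

variable {C : Type*} [DecidableEq C] {P : C → C → Prop} {x y : C}

theorem dswap_swapPref_lt [Fintype C] {Pi : C → C → Prop} (hPi : IsPref Pi) (hP : IsPref P)
    (hxy : Adjacent P x y) (hyx : Pi y x) : dswap Pi (swapPref P x y) < dswap Pi P := by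
  have hreversed : {p : C × C | Pi p.1 p.2 ∧ swapPref P x y p.2 p.1}
      = {p : C × C | Pi p.1 p.2 ∧ P p.2 p.1} \ {(y, x)} := by
    ext ⟨a, b⟩
    simp only [Set.mem_ofPred_eq, Set.mem_sdiff, Set.mem_singleton_iff]
    by_cases h₁ : (a, b) = (y, x)
    · simp only [Prod.mk.injEq] at h₁
      obtain ⟨rfl, rfl⟩ := h₁
      simp [swapPref, hP.asymm hxy.1]
    by_cases h₂ : (a, b) = (x, y)
    · simp only [Prod.mk.injEq] at h₂
      obtain ⟨rfl, rfl⟩ := h₂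
      simp [hPi.asymm hyx]
    rw [hP.swapPref_iff hxy (by grind) (by grind)]
    tauto
  rw [dswap, dswap, hreversed]
  exact Set.ncard_sdiff_singleton_lt_of_mem ⟨hyx, hxy.1⟩ (Set.toFinite _)

theorem Feasible.swapPref {Q : C → C → Prop} {cj ck : C} (hfeas : Feasible Q cj ck P)
    {Pi : C → C → Prop} (hPi : IsPref Pi) (hPiQ : Extends Pi Q) (hxy : Adjacent P x y)
    (hyx : Pi y x) (hkj : ¬ Adjacent P ck cj) : Feasible Q cj ck (_root_.swapPref P x y) := by
  obtain ⟨hP, hPQ, hPkj⟩ := hfeas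
  have hcases : ∀ {a b}, P a b → (a, b) ≠ (x, y) → _root_.swapPref P x y a b := fun hab h =>
    (hP.swapPref_iff hxy h fun h' => by grind [hP.asymm hxy.1]).2 hab
  refine ⟨hP.swapPref x y, fun a b hab => ?_, hcases hPkj fun h => by grind⟩
  by_cases h : (a, b) = (x, y)
  · exact absurd (hPiQ a b hab) (by grind [hPi.asymm hyx])
  · exact hcases (hPQ a b hab) h

end

theorem statement7 {C : Type*} [Fintype C]
    (Q : C → C → Prop)
    (Pi : C → C → Prop) (hPi : IsPref Pi) (hPiQ : Extends Pi Q)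
    (cj ck : C) (hjk : Pi cj ck)
    (P' : C → C → Prop) (hfeas : Feasible Q cj ck P')
    (hbetween : ∃ c : C, P' ck c ∧ P' c cj) :
    ¬ InMu Q cj ck Pi P' := by
  classical
  rintro ⟨-, hmin⟩
  have hP' : IsPref P' := hfeas.1
  obtain ⟨x, y, hxy, hyx⟩ := hP'.exists_adjacent_inversion hPi hfeas.2.2 hjk
  obtain ⟨c, hkc, hcj⟩ := hbetween
  have hkj : ¬ Adjacent P' ck cj := fun h => h.2 c ⟨hkc, hcj⟩
  exact (hmin _ (hfeas.swapPref hPi hPiQ hxy hyx hkj)).not_gt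
    (dswap_swapPref_lt hPi hP' hxy hyx)
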